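/- (Watson's identity) For u, v ∈ ℂ and q = e^{2πiτ} with Im τ > 0: θ₃(u+v, q)·θ₂(u-v, q) + θ₂(u+v, q)·θ₃(u-v, q) = θ₂(u, q^{1/2})·θ₂(v, q^{1/2}). -/
import Mathlib

open Complex

/-- `θ₂(u,q) = Σ_{d ∈ ℤ+1/2} e^{2πiud} q^{d²}` with `q = e^{2πiτ}`, `q^{d²} = e^{2πiτd²}`. -/
noncomputable def jacobiTheta2 (u τ : ℂ) : ℂ :=
  ∑' n : ℤ, Complex.exp (2 * Real.pi * Complex.I * u * ((n : ℂ) + 1 / 2)) *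
    Complex.exp (2 * Real.pi * Complex.I * τ * ((n : ℂ) + 1 / 2) ^ 2)

/-- `θ₃(u,q) = Σ_{d ∈ ℤ} e^{2πiud} q^{d²}` with `q = e^{2πiτ}`. -/
noncomputable def jacobiTheta3 (u τ : ℂ) : ℂ :=
  ∑' n : ℤ, Complex.exp (2 * Real.pi * Complex.I * u * (n : ℂ)) *
    Complex.exp (2 * Real.pi * Complex.I * τ * (n : ℂ) ^ 2)

noncomputable def W2 (u τ : ℂ) (n : ℤ) : ℂ :=
  Complex.exp (2 * Real.pi * Complex.I * u * ((n : ℂ) + 1 / 2)) *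
    Complex.exp (2 * Real.pi * Complex.I * τ * ((n : ℂ) + 1 / 2) ^ 2)

noncomputable def W3 (u τ : ℂ) (n : ℤ) : ℂ :=
  Complex.exp (2 * Real.pi * Complex.I * u * (n : ℂ)) *
    Complex.exp (2 * Real.pi * Complex.I * τ * (n : ℂ) ^ 2)

lemma W3_eq (u τ : ℂ) (n : ℤ) : W3 u τ n = jacobiTheta₂_term n u (2 * τ) := by
  rw [W3, jacobiTheta₂_term, ← Complex.exp_add]
  congr 1
  ring

lemma W2_eq (u τ : ℂ) (n : ℤ) :
    W2 u τ n = Complex.exp (Real.pi * Complex.I * u + Real.pi * Complex.I * τ / 2) *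
      jacobiTheta₂_term n (u + τ) (2 * τ) := by
  rw [W2, jacobiTheta₂_term, ← Complex.exp_add, ← Complex.exp_add]
  congr 1
  ring

lemma summable_norm_W3 (u : ℂ) {τ : ℂ} (hτ : 0 < τ.im) :
    Summable fun n : ℤ => ‖W3 u τ n‖ := by
  simp only [W3_eq]
  rw [summable_norm_iff]
  exact (summable_jacobiTheta₂_term_iff _ _).mpr (by simp [hτ])

lemma summable_norm_W2 (u : ℂ) {τ : ℂ} (hτ : 0 < τ.im) :
    Summable fun n : ℤ => ‖W2 u τ n‖ := by
  simp only [W2_eq, norm_mul]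
  apply Summable.mul_left
  rw [summable_norm_iff]
  exact (summable_jacobiTheta₂_term_iff _ _).mpr (by simp [hτ])

/-- Watson's identity: for `q = e^{2πiτ}` with `Im τ > 0` (so `q^{1/2} = e^{πiτ}`
corresponds to the parameter `τ/2`),
`θ₃(u+v,q) θ₂(u-v,q) + θ₂(u+v,q) θ₃(u-v,q) = θ₂(u,q^{1/2}) θ₂(v,q^{1/2})`. -/
theorem stmt13 (u v τ : ℂ) (hτ : 0 < τ.im) :
    jacobiTheta3 (u + v) τ * jacobiTheta2 (u - v) τ +
      jacobiTheta2 (u + v) τ * jacobiTheta3 (u - v) τ =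
    jacobiTheta2 u (τ / 2) * jacobiTheta2 v (τ / 2) := by
  have hτ2 : 0 < (τ / 2).im := by simpa using by positivity
  -- rewrite each product as a double sum
  have h1 : jacobiTheta3 (u + v) τ * jacobiTheta2 (u - v) τ =
      ∑' p : ℤ × ℤ, W3 (u + v) τ p.1 * W2 (u - v) τ p.2 :=
    tsum_mul_tsum_of_summable_norm (summable_norm_W3 _ hτ) (summable_norm_W2 _ hτ)
  have h2 : jacobiTheta2 (u + v) τ * jacobiTheta3 (u - v) τ =
      ∑' p : ℤ × ℤ, W2 (u + v) τ p.1 * W3 (u - v) τ p.2 :=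
    tsum_mul_tsum_of_summable_norm (summable_norm_W2 _ hτ) (summable_norm_W3 _ hτ)
  have h3 : jacobiTheta2 u (τ / 2) * jacobiTheta2 v (τ / 2) =
      ∑' p : ℤ × ℤ, W2 u (τ / 2) p.1 * W2 v (τ / 2) p.2 :=
    tsum_mul_tsum_of_summable_norm (summable_norm_W2 _ hτ2) (summable_norm_W2 _ hτ2)
  rw [h1, h2, h3]
  set F : ℤ × ℤ → ℂ := fun p => W2 u (τ / 2) p.1 * W2 v (τ / 2) p.2 with hF
  have hFs : Summable F :=
    summable_mul_of_summable_norm (summable_norm_W2 _ hτ2) (summable_norm_W2 _ hτ2)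
  set s : Set (ℤ × ℤ) := {p | (p.1 + p.2) % 2 = 1} with hs
  have hsplit : (∑' p : s, F p) + ∑' p : ↥sᶜ, F p = ∑' p, F p :=
    Summable.tsum_add_tsum_compl (hFs.subtype s) (hFs.subtype sᶜ)
  rw [← hsplit]
  -- odd part
  let eOdd : ℤ × ℤ ≃ s :=
    { toFun := fun q => ⟨(q.1 + q.2, q.1 - q.2 - 1), by simp [hs]; omega⟩
      invFun := fun p => ((p.1.1 + p.1.2 + 1) / 2, (p.1.1 - p.1.2 - 1) / 2)
      left_inv := fun q => by ext <;> simp <;> omega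
      right_inv := fun p => by
        have := p.2
        simp only [hs, Set.mem_setOf_eq] at this
        ext <;> simp <;> omega }
  let eEven : ℤ × ℤ ≃ ↥sᶜ :=
    { toFun := fun q => ⟨(q.1 + q.2, q.1 - q.2), by simp [hs]; omega⟩
      invFun := fun p => ((p.1.1 + p.1.2) / 2, (p.1.1 - p.1.2) / 2)
      left_inv := fun q => by ext <;> simp <;> omega
      right_inv := fun p => by
        have := p.2
        simp only [hs, Set.mem_compl_iff, Set.mem_setOf_eq] at this
        ext <;> simp <;> omega }
  have hodd : (∑' p : s, F p) = ∑' p : ℤ × ℤ, W3 (u + v) τ p.1 * W2 (u - v) τ p.2 := by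
    rw [← eOdd.tsum_eq (fun p : s => F p)]
    refine tsum_congr fun q => ?_
    show F (q.1 + q.2, q.1 - q.2 - 1) = _
    simp only [hF, W2, W3]
    rw [← Complex.exp_add, ← Complex.exp_add, ← Complex.exp_add, ← Complex.exp_add,
      ← Complex.exp_add, ← Complex.exp_add]
    congr 1
    push_cast
    ring
  have heven : (∑' p : ↥sᶜ, F p) = ∑' p : ℤ × ℤ, W2 (u + v) τ p.1 * W3 (u - v) τ p.2 := by
    rw [← eEven.tsum_eq (fun p : ↥sᶜ => F p)]
    refine tsum_congr fun q => ?_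
    show F (q.1 + q.2, q.1 - q.2) = _
    simp only [hF, W2, W3]
    rw [← Complex.exp_add, ← Complex.exp_add, ← Complex.exp_add, ← Complex.exp_add,
      ← Complex.exp_add, ← Complex.exp_add]
    congr 1
    push_cast
    ring
  rw [hodd, heven]
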